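/- arXiv:1902.01618 — 2 statements merged into one kernel-verified Lean document; each statement's English description precedes it below -/
import Mathlib

section
/- (Theorem 1, explicit form) Let W_x ∈ ℝ^{n×n} with ‖W_x‖ < 1 and W_in ∈ ℝ^{n×m}, and define the Echo State Network state map f(x, ω) = tanh(W_x x + W_in ω). Let Q = I − W_xᵀ W_x, λ_min(Q) its smallest eigenvalue, and α = √(1 − λ_min(Q)). For any input sequence ω : ℕ → ℝᵐ and initial states x₀, x₀' ∈ ℝⁿ, the trajectories x(k+1) = f(x(k), ω(k)) with x(0) = x₀ and x'(k+1) = f(x'(k), ω(k)) with x'(0) = x₀' satisfy, for all k ∈ ℕ, ‖x(k) − x'(k)‖₂ ≤ α^k ‖x₀ − x₀'‖₂, and moreover 0 ≤ α < 1. -/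
open Matrix
open scoped Matrix.Norms.L2Operator NNReal ComplexOrder

/-!
Componentwise `tanh` is `1`-Lipschitz for the Euclidean norm, so one step of the network shrinks
the distance of two trajectories driven by the same input at least as much as `W_x` does.
Since `‖W_x v‖² = ‖v‖² - vᵀ Q v` and the Rayleigh quotient of `Q` is at least `λ_min(Q)`,
`W_x` shrinks distances by the factor `α`. Finally `‖W_x‖ < 1` makes `Q` positive definite,
so `λ_min(Q) > 0` and `α < 1`.
-/
theorem Real.hasDerivAt_tanh (x : ℝ) : HasDerivAt tanh (1 / cosh x ^ 2) x := by
  have h := (hasDerivAt_sinh x).div (hasDerivAt_cosh x) (cosh_pos x).ne'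
  rw [← sq, ← sq, cosh_sq_sub_sinh_sq] at h
  rwa [show tanh = sinh / cosh from funext tanh_eq_sinh_div_cosh]

theorem Real.lipschitzWith_one_tanh : LipschitzWith 1 tanh := by
  refine lipschitzWith_of_nnnorm_deriv_le (fun x => (hasDerivAt_tanh x).differentiableAt)
    fun x => ?_
  rw [(hasDerivAt_tanh x).deriv, ← NNReal.coe_le_coe, coe_nnnorm, Real.norm_eq_abs,
    abs_of_nonneg (by positivity), NNReal.coe_one, div_le_one (by positivity)]
  nlinarith [one_le_cosh x]

theorem LipschitzWith.piLp_map {ι α β : Type*} [Fintype ι] [SeminormedAddCommGroup α]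
    [SeminormedAddCommGroup β] {f : α → β} {K : ℝ≥0} (hf : LipschitzWith K f) :
    LipschitzWith K fun u : PiLp 2 (fun _ : ι => α) =>
      (WithLp.toLp 2 fun i => f (u i) : PiLp 2 fun _ : ι => β) := by
  refine LipschitzWith.of_dist_le_mul fun u v => ?_
  rw [PiLp.dist_eq_of_L2, PiLp.dist_eq_of_L2]
  calc √(∑ i, dist (f (u i)) (f (v i)) ^ 2) ≤ √(∑ i, (K * dist (u i) (v i)) ^ 2) := by
        gcongr with i
        exact hf.dist_le_mul _ _
    _ = K * √(∑ i, dist (u i) (v i) ^ 2) := by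
        simp_rw [mul_pow, ← Finset.mul_sum]
        rw [Real.sqrt_mul (by positivity), Real.sqrt_sq K.coe_nonneg]

section Hermitian

variable {𝕜 n : Type*} [RCLike 𝕜] [Fintype n] [DecidableEq n]

theorem Matrix.IsHermitian.posSemidef_sub_smul_one {A : Matrix n n 𝕜} (hA : A.IsHermitian)
    {c : ℝ} (hc : ∀ i, c ≤ hA.eigenvalues i) : (A - (c : 𝕜) • 1).PosSemidef := by
  refine posSemidef_iff_isHermitian_and_spectrum_nonneg.mpr ⟨hA.sub ?_, ?_⟩
  · simp [IsHermitian]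
  rw [← Algebra.algebraMap_eq_smul_one, ← spectrum.sub_singleton_eq, hA.spectrum_eq_image_range]
  rintro _ ⟨_, ⟨_, ⟨i, rfl⟩, rfl⟩, _, rfl, rfl⟩
  simpa only [Set.mem_ofPred_eq, ← RCLike.ofReal_sub, RCLike.ofReal_nonneg, sub_nonneg] using hc i

theorem Matrix.IsHermitian.mul_star_dotProduct_le_star_dotProduct_mulVec {A : Matrix n n 𝕜}
    (hA : A.IsHermitian) {c : ℝ} (hc : ∀ i, c ≤ hA.eigenvalues i) (v : n → 𝕜) :
    (c : 𝕜) * (star v ⬝ᵥ v) ≤ star v ⬝ᵥ (A *ᵥ v) := by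
  have := (hA.posSemidef_sub_smul_one hc).dotProduct_mulVec_nonneg v
  rwa [sub_mulVec, dotProduct_sub, smul_mulVec, one_mulVec, dotProduct_smul, smul_eq_mul,
    sub_nonneg] at this

end Hermitian

section RealMatrix

theorem EuclideanSpace.real_norm_sq_eq_dotProduct {n : Type*} [Fintype n]
    (v : EuclideanSpace ℝ n) : ‖v‖ ^ 2 = v.ofLp ⬝ᵥ v.ofLp := by
  rw [← real_inner_self_eq_norm_sq, EuclideanSpace.inner_eq_star_dotProduct, star_trivial]

variable {m n : Type*} [Fintype m] [Fintype n] [DecidableEq n]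

theorem Matrix.dotProduct_one_sub_transpose_mul_self_mulVec (W : Matrix m n ℝ)
    (v : EuclideanSpace ℝ n) :
    v.ofLp ⬝ᵥ ((1 - Wᵀ * W) *ᵥ v.ofLp) = ‖v‖ ^ 2 - ‖toEuclideanLin W v‖ ^ 2 := by
  rw [EuclideanSpace.real_norm_sq_eq_dotProduct, EuclideanSpace.real_norm_sq_eq_dotProduct,
    ofLp_toLpLin, toLin'_apply, sub_mulVec, one_mulVec, dotProduct_sub, ← mulVec_mulVec,
    dotProduct_mulVec, vecMul_transpose]

theorem Matrix.posDef_one_sub_transpose_mul_self (W : Matrix m n ℝ) (hW : ‖W‖ < 1) :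
    (1 - Wᵀ * W).PosDef := by
  refine .of_dotProduct_mulVec_pos ?_ fun v hv => ?_
  · simpa [conjTranspose_eq_transpose_of_trivial] using
      isHermitian_one.sub (isHermitian_conjTranspose_mul_self W)
  rw [star_trivial, ← WithLp.ofLp_toLp 2 v, dotProduct_one_sub_transpose_mul_self_mulVec, sub_pos]
  have hv' : 0 < ‖WithLp.toLp 2 v‖ := norm_pos_iff.mpr (by simpa using hv)
  gcongr
  calc ‖toEuclideanLin W (WithLp.toLp 2 v)‖ ≤ ‖W‖ * ‖WithLp.toLp 2 v‖ := l2_opNorm_mulVec W _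
    _ < ‖WithLp.toLp 2 v‖ := mul_lt_of_lt_one_left hv' hW

theorem Matrix.norm_toEuclideanLin_le_sqrt_one_sub_iInf_eigenvalues (W : Matrix m n ℝ)
    (hQ : (1 - Wᵀ * W).IsHermitian) (v : EuclideanSpace ℝ n) :
    ‖toEuclideanLin W v‖ ≤ √(1 - ⨅ i, hQ.eigenvalues i) * ‖v‖ := by
  have hRayleigh := hQ.mul_star_dotProduct_le_star_dotProduct_mulVec
    (fun i => ciInf_le (Set.finite_range hQ.eigenvalues).bddBelow i) v.ofLp
  rw [star_trivial, dotProduct_one_sub_transpose_mul_self_mulVec,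
    ← EuclideanSpace.real_norm_sq_eq_dotProduct, RCLike.ofReal_real_eq_id, id] at hRayleigh
  calc ‖toEuclideanLin W v‖ = √(‖toEuclideanLin W v‖ ^ 2) := (Real.sqrt_sq (norm_nonneg _)).symm
    _ ≤ √((1 - ⨅ i, hQ.eigenvalues i) * ‖v‖ ^ 2) := by gcongr; linarith
    _ = √(1 - ⨅ i, hQ.eigenvalues i) * ‖v‖ := by
      rw [Real.sqrt_mul' _ (sq_nonneg _), Real.sqrt_sq (norm_nonneg _)]

theorem Matrix.sqrt_one_sub_iInf_eigenvalues_lt_one [Nonempty n] (W : Matrix m n ℝ)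
    (hW : ‖W‖ < 1) (hQ : (1 - Wᵀ * W).IsHermitian) : √(1 - ⨅ i, hQ.eigenvalues i) < 1 := by
  obtain ⟨j, hj⟩ := exists_eq_ciInf_of_finite (f := hQ.eigenvalues)
  have hpos : 0 < hQ.eigenvalues j := (W.posDef_one_sub_transpose_mul_self hW).eigenvalues_pos j
  rw [Real.sqrt_lt' one_pos, ← hj]
  linarith

end RealMatrix

theorem esn_incremental_exponential_bound {n m : ℕ} (hn : 0 < n)
    (Wx : Matrix (Fin n) (Fin n) ℝ) (Win : Matrix (Fin n) (Fin m) ℝ)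
    (hW : ‖Wx‖ < 1) (hQ : (1 - Wxᵀ * Wx).IsHermitian)
    (ω : ℕ → EuclideanSpace ℝ (Fin m)) (x x' : ℕ → EuclideanSpace ℝ (Fin n))
    (hx : ∀ k, x (k + 1) =
      (WithLp.toLp 2 fun i => Real.tanh ((Matrix.toEuclideanLin Wx (x k) + Matrix.toEuclideanLin Win (ω k)) i) :
        EuclideanSpace ℝ (Fin n)))
    (hx' : ∀ k, x' (k + 1) =
      (WithLp.toLp 2 fun i => Real.tanh ((Matrix.toEuclideanLin Wx (x' k) + Matrix.toEuclideanLin Win (ω k)) i) :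
        EuclideanSpace ℝ (Fin n))) :
    (∀ k : ℕ, ‖x k - x' k‖ ≤ (Real.sqrt (1 - ⨅ i, hQ.eigenvalues i)) ^ k * ‖x 0 - x' 0‖) ∧
    0 ≤ Real.sqrt (1 - ⨅ i, hQ.eigenvalues i) ∧
    Real.sqrt (1 - ⨅ i, hQ.eigenvalues i) < 1 := by
  have : Nonempty (Fin n) := Fin.pos_iff_nonempty.mp hn
  set α := √(1 - ⨅ i, hQ.eigenvalues i)
  have hα : 0 ≤ α := Real.sqrt_nonneg _
  have hstep (k : ℕ) : dist (x (k + 1)) (x' (k + 1)) ≤ α * dist (x k) (x' k) := by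
    rw [hx, hx']
    calc _ ≤ dist (toEuclideanLin Wx (x k) + toEuclideanLin Win (ω k))
          (toEuclideanLin Wx (x' k) + toEuclideanLin Win (ω k)) := by
          simpa using (Real.lipschitzWith_one_tanh.piLp_map (ι := Fin n)).dist_le_mul
            (toEuclideanLin Wx (x k) + toEuclideanLin Win (ω k))
            (toEuclideanLin Wx (x' k) + toEuclideanLin Win (ω k))
      _ = ‖toEuclideanLin Wx (x k - x' k)‖ := by rw [dist_add_right, dist_eq_norm, map_sub]
      _ ≤ α * dist (x k) (x' k) := by
          rw [dist_eq_norm]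
          exact Wx.norm_toEuclideanLin_le_sqrt_one_sub_iInf_eigenvalues hQ _
  refine ⟨fun k => ?_, hα, Wx.sqrt_one_sub_iInf_eigenvalues_lt_one hW hQ⟩
  simpa only [dist_eq_norm] using
    le_geom (u := fun k => dist (x k) (x' k)) hα k fun j _ => hstep j
end

section
/- (Echo state property under ‖W_x‖ < 1) Let W_x ∈ ℝ^{n×n} with ‖W_x‖ < 1 and W_in ∈ ℝ^{n×m}, and let ω : ℤ → ℝᵐ be any bi-infinite input sequence. If x', x'' : ℤ → ℝⁿ are two complete state sequences compatible with the Echo State Network dynamics, i.e. x'(k+1) = tanh(W_x x'(k) + W_in ω(k)) and x''(k+1) = tanh(W_x x''(k) + W_in ω(k)) for all k ∈ ℤ, then x'(k) = x''(k) for all k ∈ ℤ. -/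
/-!
Since `tanh` is 1-Lipschitz, the update `x ↦ tanh (W_x x + W_in u)` is `‖W_x‖`-Lipschitz for
every input `u`, and every state it produces lies in the cube `[-1, 1]ⁿ`, so two compatible state
sequences stay within distance `2√n`. Running the contraction `j` steps backwards from time `k`
bounds their distance at time `k` by `‖W_x‖ ^ j * 2√n`, which tends to `0`.
-/

open Matrix
open scoped Matrix.Norms.L2Operator NNReal

namespace Real

theorem hasDerivAt_tanh_s9 (x : ℝ) : HasDerivAt tanh (1 - tanh x ^ 2) x := by
  have h := (hasDerivAt_sinh x).div (hasDerivAt_cosh x) (cosh_pos x).ne'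
  rw [show sinh / cosh = tanh from funext fun y => (tanh_eq_sinh_div_cosh y).symm] at h
  refine h.congr_deriv ?_
  rw [tanh_eq_sinh_div_cosh]
  field_simp

theorem lipschitzWith_tanh : LipschitzWith 1 tanh := by
  refine lipschitzOnWith_univ.1 <| convex_univ.lipschitzOnWith_of_nnnorm_hasDerivWithin_le
    (fun x _ => (hasDerivAt_tanh_s9 x).hasDerivWithinAt) fun x _ => ?_
  rw [← NNReal.coe_le_coe, coe_nnnorm, norm_eq_abs, NNReal.coe_one,
    abs_of_pos (sub_pos.2 (tanh_sq_lt_one x))]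
  linarith [sq_nonneg (tanh x)]

end Real

namespace EuclideanSpace

variable {ι : Type*} [Fintype ι]

theorem lipschitzWith_toLp_comp {f : ℝ → ℝ} {K : ℝ≥0} (hf : LipschitzWith K f) :
    LipschitzWith K fun v : EuclideanSpace ℝ ι => (WithLp.toLp 2 fun i => f (v i) :
      EuclideanSpace ℝ ι) := by
  refine LipschitzWith.of_dist_le_mul fun v w => ?_
  rw [dist_eq, dist_eq, ← Real.sqrt_sq K.coe_nonneg, ← Real.sqrt_mul (sq_nonneg _),
    Finset.mul_sum]
  gcongr with i
  rw [← mul_pow]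
  gcongr
  exact hf.dist_le_mul _ _

theorem norm_le_sqrt_card_mul {v : EuclideanSpace ℝ ι} {C : ℝ} (hC : 0 ≤ C)
    (hv : ∀ i, ‖v i‖ ≤ C) : ‖v‖ ≤ √(Fintype.card ι) * C := by
  rw [norm_eq, ← Real.sqrt_sq hC, ← Real.sqrt_mul (Nat.cast_nonneg _)]
  gcongr
  calc ∑ i, ‖v i‖ ^ 2 ≤ ∑ _i : ι, C ^ 2 := by gcongr with i; exact hv i
    _ = Fintype.card ι * C ^ 2 := by simp

end EuclideanSpace

theorem eq_of_lipschitzWith_lt_one_of_dist_le {X : Type*} [MetricSpace X] {F : ℤ → X → X}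
    {K : ℝ≥0} (hF : ∀ k, LipschitzWith K (F k)) (hK : K < 1) {x y : ℤ → X}
    (hx : ∀ k, x (k + 1) = F k (x k)) (hy : ∀ k, y (k + 1) = F k (y k)) {C : ℝ}
    (hC : ∀ k, dist (x k) (y k) ≤ C) : x = y := by
  have hpow : ∀ (j : ℕ) k, dist (x k) (y k) ≤ K ^ j * C := by
    intro j
    induction j with
    | zero => simpa using hC
    | succ j ih =>
      intro k
      obtain ⟨l, rfl⟩ : ∃ l, k = l + 1 := ⟨k - 1, by ring⟩
      calc dist (x (l + 1)) (y (l + 1)) ≤ K * dist (x l) (y l) := by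
            rw [hx, hy]; exact (hF l).dist_le_mul _ _
        _ ≤ K * (K ^ j * C) := by gcongr; exact ih l
        _ = K ^ (j + 1) * C := by ring
  have hlim : Filter.Tendsto (fun j : ℕ => (K : ℝ) ^ j * C) Filter.atTop (nhds 0) := by
    simpa using (tendsto_pow_atTop_nhds_zero_of_lt_one K.coe_nonneg hK).mul_const C
  funext k
  exact dist_le_zero.1 <| ge_of_tendsto' hlim fun j => hpow j k

noncomputable def esnUpdate {n m : ℕ} (Wx : Matrix (Fin n) (Fin n) ℝ)
    (Win : Matrix (Fin n) (Fin m) ℝ) (u : EuclideanSpace ℝ (Fin m))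
    (x : EuclideanSpace ℝ (Fin n)) : EuclideanSpace ℝ (Fin n) :=
  WithLp.toLp 2 fun i => Real.tanh ((toEuclideanLin Wx x + toEuclideanLin Win u) i)

section esnUpdate

variable {n m : ℕ} (Wx : Matrix (Fin n) (Fin n) ℝ) (Win : Matrix (Fin n) (Fin m) ℝ)
  (u : EuclideanSpace ℝ (Fin m))

theorem lipschitzWith_esnUpdate : LipschitzWith ‖Wx‖₊ (esnUpdate Wx Win u) := by
  have hlin : LipschitzWith ‖Wx‖₊ (toEuclideanLin Wx) :=
    ((toEuclideanLin.trans LinearMap.toContinuousLinearMap) Wx).lipschitz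
  have h := (EuclideanSpace.lipschitzWith_toLp_comp Real.lipschitzWith_tanh).comp
    ((isometry_add_right (toEuclideanLin Win u)).lipschitz.comp hlin)
  rwa [one_mul, one_mul] at h

theorem norm_esnUpdate_le (x : EuclideanSpace ℝ (Fin n)) : ‖esnUpdate Wx Win u x‖ ≤ √n := by
  simpa using EuclideanSpace.norm_le_sqrt_card_mul (v := esnUpdate Wx Win u x) zero_le_one
    fun i => by rw [Real.norm_eq_abs]; exact (Real.abs_tanh_lt_one _).le

end esnUpdate

theorem esn_echo_state_property {n m : ℕ}
    (Wx : Matrix (Fin n) (Fin n) ℝ) (Win : Matrix (Fin n) (Fin m) ℝ)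
    (hW : ‖Wx‖ < 1)
    (ω : ℤ → EuclideanSpace ℝ (Fin m)) (x' x'' : ℤ → EuclideanSpace ℝ (Fin n))
    (hx' : ∀ k : ℤ, x' (k + 1) =
      (WithLp.toLp 2 (fun i => Real.tanh ((Matrix.toEuclideanLin Wx (x' k) + Matrix.toEuclideanLin Win (ω k)) i)) :
        EuclideanSpace ℝ (Fin n)))
    (hx'' : ∀ k : ℤ, x'' (k + 1) =
      (WithLp.toLp 2 (fun i => Real.tanh ((Matrix.toEuclideanLin Wx (x'' k) + Matrix.toEuclideanLin Win (ω k)) i)) :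
        EuclideanSpace ℝ (Fin n))) :
    ∀ k : ℤ, x' k = x'' k := by
  have hstate : ∀ x : ℤ → EuclideanSpace ℝ (Fin n),
      (∀ k, x (k + 1) = esnUpdate Wx Win (ω k) (x k)) → ∀ k, ‖x k‖ ≤ √n := by
    intro x hx k
    rw [← sub_add_cancel k 1, hx]
    exact norm_esnUpdate_le Wx Win _ _
  have hdist : ∀ k, dist (x' k) (x'' k) ≤ √n + √n := fun k =>
    (dist_le_norm_add_norm _ _).trans (add_le_add (hstate x' hx' k) (hstate x'' hx'' k))
  exact congrFun <| eq_of_lipschitzWith_lt_one_of_dist_le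
    (fun k => lipschitzWith_esnUpdate Wx Win (ω k)) hW hx' hx'' hdist
end
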